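/- If M is locally connected, f is cw-expansive, and f admits a shadowing map, then f is expansive. -/

import Mathlib

open Filter Metric Topology

variable {M : Type*}

/-- A `δ`-pseudo-orbit of `f`. -/
def IsPseudoOrbit [MetricSpace M] (f : M → M) (δ : ℝ) (x : ℤ → M) : Prop :=
  ∀ i : ℤ, dist (x (i + 1)) (f (x i)) ≤ δ

/-- The set `M̃(f,δ)` of `δ`-pseudo-orbits, as a subset of `M^ℤ` (product topology). -/
def PseudoOrbits [MetricSpace M] (f : M → M) (δ : ℝ) : Set (ℤ → M) :=
  {x | IsPseudoOrbit f δ x}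

/-- The shift `σ`. -/
def shiftSeq (x : ℤ → M) : ℤ → M := fun i => x (i + 1)

/-- The iterated shift `σ^i`. -/
def shiftIter (i : ℤ) (x : ℤ → M) : ℤ → M := fun j => x (j + i)

/-- The orbit map `orb_f(p)_i = f^i(p)`. -/
def orbitMap (f : Equiv.Perm M) (p : M) : ℤ → M := fun i => (f ^ i) p

/-- The metric `d̃_s(x,y) = Σ_{i∈ℤ} 2^{-|i|} d(x_i,y_i)` on `M^ℤ`. -/
noncomputable def dtilde [MetricSpace M] (x y : ℤ → M) : ℝ :=
  ∑' i : ℤ, (2 : ℝ) ^ (-|i|) * dist (x i) (y i)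

/-- A pseudo-orbit map: a continuous map on `M̃(f,δ)` (δ > 0) sending each true orbit
to its initial point. -/
def IsPseudoOrbitMap [MetricSpace M] (f : Equiv.Perm M) (δ : ℝ) (Po : (ℤ → M) → M) : Prop :=
  0 < δ ∧ ContinuousOn Po (PseudoOrbits (⇑f) δ) ∧ ∀ p : M, Po (orbitMap f p) = p

/-- `Po` induces shadowing: for all `ε > 0` there is `γ ∈ (0,δ]` such that every
`γ`-pseudo-orbit `x` satisfies `d(f^i(Po x), x_i) ≤ ε` for all `i`. -/
def InducesShadowing [MetricSpace M] (f : Equiv.Perm M) (δ : ℝ) (Po : (ℤ → M) → M) : Prop :=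
  ∀ ε > (0:ℝ), ∃ γ : ℝ, 0 < γ ∧ γ ≤ δ ∧ ∀ x ∈ PseudoOrbits (⇑f) γ,
    ∀ i : ℤ, dist ((f ^ i) (Po x)) (x i) ≤ ε

/-- The defining condition of a shadowing map. -/
def ShadowingMapCond [MetricSpace M] (f : Equiv.Perm M) (δ : ℝ) (Sh : (ℤ → M) → M) : Prop :=
  ∀ ε > (0:ℝ), ∃ γ : ℝ, 0 < γ ∧ γ ≤ δ ∧ ∀ x ∈ PseudoOrbits (⇑f) γ,
    ∀ i : ℤ, dist ((f ^ i) (Sh x)) (Sh (shiftIter i x)) ≤ ε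

/-- A shadowing map. -/
def IsShadowingMap [MetricSpace M] (f : Equiv.Perm M) (δ : ℝ) (Sh : (ℤ → M) → M) : Prop :=
  IsPseudoOrbitMap f δ Sh ∧ ShadowingMapCond f δ Sh

/-- The shadowing property. -/
def ShadowingProperty [MetricSpace M] (f : Equiv.Perm M) : Prop :=
  ∀ ε > (0:ℝ), ∃ δ > (0:ℝ), ∀ x ∈ PseudoOrbits (⇑f) δ,
    ∃ p : M, ∀ i : ℤ, dist ((f ^ i) p) (x i) ≤ ε

/-- `x` is a two-sided limit pseudo-orbit: `d(f(x_i), x_{i+1}) → 0` as `|i| → ∞`. -/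
def TwoSidedLimit [MetricSpace M] (f : M → M) (x : ℤ → M) : Prop :=
  Tendsto (fun i : ℤ => dist (f (x i)) (x (i + 1))) cofinite (nhds 0)

/-- The defining condition of an L-shadowing map. -/
def LShadowingMapCond [MetricSpace M] (f : Equiv.Perm M) (δ : ℝ) (Sh : (ℤ → M) → M) : Prop :=
  ∀ ε > (0:ℝ), ∃ γ : ℝ, 0 < γ ∧ γ ≤ δ ∧ ∀ x ∈ PseudoOrbits (⇑f) γ, TwoSidedLimit (⇑f) x →
    (∀ i : ℤ, dist ((f ^ i) (Sh x)) (x i) ≤ ε) ∧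
    Tendsto (fun i : ℤ => dist ((f ^ i) (Sh x)) (x i)) cofinite (nhds 0)

/-- An L-shadowing map. -/
def IsLShadowingMap [MetricSpace M] (f : Equiv.Perm M) (δ : ℝ) (Sh : (ℤ → M) → M) : Prop :=
  IsPseudoOrbitMap f δ Sh ∧ LShadowingMapCond f δ Sh

/-- Shift-invariance of a pseudo-orbit map: `Sh(σ x) = f(Sh x)` on `M̃(f,δ)`. -/
def ShiftInvariant [MetricSpace M] (f : Equiv.Perm M) (δ : ℝ) (Sh : (ℤ → M) → M) : Prop :=
  ∀ x ∈ PseudoOrbits (⇑f) δ, Sh (shiftSeq x) = f (Sh x)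

/-- Self-tuning of a pseudo-orbit map. -/
def HasSelfTuning [MetricSpace M] (f : Equiv.Perm M) (δ : ℝ) (Sh : (ℤ → M) → M) : Prop :=
  ∀ ε > (0:ℝ), ∃ γ > (0:ℝ), ∀ x ∈ PseudoOrbits (⇑f) δ, ∀ i : ℤ,
    dtilde (shiftIter i x) (orbitMap f (x i)) < γ →
    dist ((f ^ i) (Sh x)) (Sh (shiftIter i x)) ≤ ε

/-- The connecting map `con_f(p,q)`. -/
def connMap (f : Equiv.Perm M) (p q : M) : ℤ → M :=
  fun i => if i < 0 then (f ^ i) p else (f ^ i) q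

/-- Local stable set `W_ε^s(p)`. -/
def Ws [MetricSpace M] (f : Equiv.Perm M) (ε : ℝ) (p : M) : Set M :=
  {q | ∀ n : ℕ, dist ((f ^ (n : ℤ)) p) ((f ^ (n : ℤ)) q) ≤ ε}

/-- Local unstable set `W_ε^u(p)`. -/
def Wu [MetricSpace M] (f : Equiv.Perm M) (ε : ℝ) (p : M) : Set M :=
  {q | ∀ n : ℕ, dist ((f ^ (-(n : ℤ))) p) ((f ^ (-(n : ℤ))) q) ≤ ε}

/-- Stable set `W^s(p)`. -/
def WsLim [MetricSpace M] (f : Equiv.Perm M) (p : M) : Set M :=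
  {q | Tendsto (fun n : ℕ => dist ((f ^ (n : ℤ)) p) ((f ^ (n : ℤ)) q)) atTop (nhds 0)}

/-- Unstable set `W^u(p)`. -/
def WuLim [MetricSpace M] (f : Equiv.Perm M) (p : M) : Set M :=
  {q | Tendsto (fun n : ℕ => dist ((f ^ (-(n : ℤ))) p) ((f ^ (-(n : ℤ))) q)) atTop (nhds 0)}

/-- A shadowing bracket on `Δ_δ`. -/
def IsShadowingBracket [MetricSpace M] (f : Equiv.Perm M) (δ : ℝ) (br : M → M → M) : Prop :=
  0 < δ ∧ ContinuousOn (fun pq : M × M => br pq.1 pq.2) {pq : M × M | dist pq.1 pq.2 ≤ δ} ∧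
  (∀ p : M, br p p = p) ∧
  ∀ ε > (0:ℝ), ∃ γ : ℝ, 0 < γ ∧ γ ≤ δ ∧
    ∀ p q : M, dist p q ≤ γ → br p q ∈ Ws f ε q ∩ Wu f ε p

/-- An L-bracket on `Δ_δ`. -/
def IsLBracket [MetricSpace M] (f : Equiv.Perm M) (δ : ℝ) (br : M → M → M) : Prop :=
  0 < δ ∧ ContinuousOn (fun pq : M × M => br pq.1 pq.2) {pq : M × M | dist pq.1 pq.2 ≤ δ} ∧
  (∀ p : M, br p p = p) ∧
  ∀ ε > (0:ℝ), ∃ γ : ℝ, 0 < γ ∧ γ ≤ δ ∧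
    ∀ p q : M, dist p q ≤ γ →
      br p q ∈ (Ws f ε q ∩ WsLim f q) ∩ (Wu f ε p ∩ WuLim f p)

/-- cw-expansivity. -/
def CWExpansive [MetricSpace M] (f : Equiv.Perm M) : Prop :=
  ∃ ξ > (0:ℝ), ∀ C : Set M, IsConnected C →
    (∀ i : ℤ, Metric.diam ((f ^ i) '' C) ≤ ξ) → C.Subsingleton

/-- Expansivity. -/
def Expansive [MetricSpace M] (f : Equiv.Perm M) : Prop :=
  ∃ ξ > (0:ℝ), ∀ p q : M, p ≠ q → ∃ i : ℤ, ξ < dist ((f ^ i) p) ((f ^ i) q)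


/- Auxiliary lemmas -/

lemma pow_succ_apply (f : Equiv.Perm M) (i : ℤ) (p : M) :
    (f ^ (i + 1)) p = f ((f ^ i) p) := by
  rw [add_comm, zpow_add, zpow_one, Equiv.Perm.mul_apply]
lemma pow_pred_apply (f : Equiv.Perm M) (i : ℤ) (p : M) :
    (f ^ (i - 1)) p = f.symm ((f ^ i) p) := by
  rw [sub_eq_add_neg, add_comm, zpow_add, zpow_neg, zpow_one, Equiv.Perm.mul_apply]; rfl
lemma orbit_mem_pseudoOrbits [MetricSpace M] (f : Equiv.Perm M) {γ : ℝ} (hγ : 0 ≤ γ) (p : M) :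
    orbitMap f p ∈ PseudoOrbits (⇑f) γ := by
  intro i; simp [orbitMap, pow_succ_apply, hγ]
lemma pseudoOrbits_mono [MetricSpace M] (f : M → M) {γ δ : ℝ} (h : γ ≤ δ) :
    PseudoOrbits f γ ⊆ PseudoOrbits f δ :=
  fun _ hx i => (hx i).trans h
lemma zero_po_eq [MetricSpace M] (f : Equiv.Perm M) {y : ℤ → M}
    (h : ∀ i : ℤ, dist (y (i + 1)) (f (y i)) ≤ 0) : ∀ i : ℤ, y i = (f ^ i) (y 0) := by
  intro i
  induction i using Int.induction_on with
  | zero => simp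
  | succ n ih =>
    have := dist_le_zero.mp (h n)
    rw [this, ih, ← pow_succ_apply]
  | pred n ih =>
    have h1 := dist_le_zero.mp (h (-(n:ℤ) - 1))
    rw [sub_add_cancel] at h1
    have : y (-(n:ℤ) - 1) = f.symm (y (-(n:ℤ))) := by rw [h1]; simp
    rw [this, ih, ← pow_pred_apply]

lemma pom_close [MetricSpace M] [CompactSpace M]
    (f : Equiv.Perm M) (hf : Continuous (⇑f)) {δ : ℝ} {Sh : (ℤ → M) → M}
    (hpo : IsPseudoOrbitMap f δ Sh) :
    ∀ ε > (0:ℝ), ∃ γ : ℝ, 0 < γ ∧ γ ≤ δ ∧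
      ∀ y ∈ PseudoOrbits (⇑f) γ, dist (Sh y) (y 0) ≤ ε := by
  obtain ⟨hδ, hcont, horb⟩ := hpo
  intro ε hε
  by_contra hcon
  push_neg at hcon
  have hγpos : ∀ n : ℕ, 0 < min δ (1 / (n + 1)) := by
    intro n
    exact lt_min hδ (by positivity)
  choose y hymem hyfar using fun n : ℕ => hcon (min δ (1 / (n + 1))) (hγpos n) (min_le_left _ _)
  obtain ⟨z, -, φ, hφ, hlim⟩ := isCompact_univ.tendsto_subseq (fun n => Set.mem_univ (y n))
  have hcoord : ∀ i : ℤ, Tendsto (fun n => y (φ n) i) atTop (𝓝 (z i)) := by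
    intro i
    exact (tendsto_pi_nhds.mp hlim) i
  have hbnd : Tendsto (fun n : ℕ => min δ (1 / ((φ n : ℝ) + 1))) atTop (𝓝 0) := by
    apply squeeze_zero (fun n => le_min hδ.le (by positivity))
    · intro n
      calc min δ (1 / ((φ n : ℝ) + 1)) ≤ 1 / ((φ n : ℝ) + 1) := min_le_right _ _
        _ ≤ 1 / ((n : ℝ) + 1) := by
            apply one_div_le_one_div_of_le (by positivity)
            have h : ((n:ℝ)) ≤ (φ n : ℝ) := Nat.cast_le.mpr (hφ.le_apply)
            linarith
    · exact tendsto_one_div_add_atTop_nhds_zero_nat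
  have hz0 : ∀ i : ℤ, dist (z (i + 1)) (f (z i)) ≤ 0 := by
    intro i
    have h1 : Tendsto (fun n => dist (y (φ n) (i + 1)) (f (y (φ n) i))) atTop
        (𝓝 (dist (z (i + 1)) (f (z i)))) :=
      (hcoord (i + 1)).dist ((hf.tendsto _).comp (hcoord i))
    refine le_of_tendsto_of_tendsto' h1 hbnd fun n => ?_
    exact hymem (φ n) i
  have hzδ : z ∈ PseudoOrbits (⇑f) δ := fun i => (hz0 i).trans hδ.le
  have hShz : Sh z = z 0 := by
    have : z = orbitMap f (z 0) := funext (zero_po_eq f hz0)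
    rw [this, horb]; rfl
  have htend : Tendsto (fun n => Sh (y (φ n))) atTop (𝓝 (z 0)) := by
    rw [← hShz]
    refine (hcont z hzδ).tendsto.comp ?_
    rw [tendsto_nhdsWithin_iff]
    exact ⟨hlim, Eventually.of_forall fun n =>
      pseudoOrbits_mono (⇑f) (min_le_left _ _) (hymem (φ n))⟩
  have hdd : Tendsto (fun n => dist (Sh (y (φ n))) (y (φ n) 0)) atTop (𝓝 0) := by
    simpa using htend.dist (hcoord 0)
  have : ε ≤ 0 := ge_of_tendsto hdd (Eventually.of_forall fun n => (hyfar (φ n)).le)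
  linarith

lemma shiftIter_mem [MetricSpace M] {f : M → M} {γ : ℝ} {x : ℤ → M}
    (hx : x ∈ PseudoOrbits f γ) (i : ℤ) : shiftIter i x ∈ PseudoOrbits f γ := by
  intro j
  have := hx (j + i)
  simpa [shiftIter, add_right_comm] using this

lemma induces_shadowing [MetricSpace M] [CompactSpace M]
    (f : Equiv.Perm M) (hf : Continuous (⇑f)) {δ : ℝ} {Sh : (ℤ → M) → M}
    (h : IsShadowingMap f δ Sh) : InducesShadowing f δ Sh := by
  intro ε hε
  obtain ⟨γ₁, hγ₁0, hγ₁δ, h1⟩ := h.2 (ε / 2) (by linarith)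
  obtain ⟨γ₂, hγ₂0, hγ₂δ, h2⟩ := pom_close f hf h.1 (ε / 2) (by linarith)
  refine ⟨min γ₁ γ₂, lt_min hγ₁0 hγ₂0, (min_le_left _ _).trans hγ₁δ, ?_⟩
  intro x hx i
  have hx1 : x ∈ PseudoOrbits (⇑f) γ₁ := pseudoOrbits_mono _ (min_le_left _ _) hx
  have hx2 : shiftIter i x ∈ PseudoOrbits (⇑f) γ₂ :=
    shiftIter_mem (pseudoOrbits_mono _ (min_le_right _ _) hx) i
  have e1 := h1 x hx1 i
  have e2 := h2 _ hx2
  have e3 : (shiftIter i x) 0 = x i := by simp [shiftIter]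
  calc dist ((f ^ i) (Sh x)) (x i)
      ≤ dist ((f ^ i) (Sh x)) (Sh (shiftIter i x)) + dist (Sh (shiftIter i x)) (x i) :=
        dist_triangle _ _ _
    _ ≤ ε / 2 + ε / 2 := add_le_add e1 (by rw [← e3]; exact e2)
    _ = ε := by ring

lemma unif_loc_conn [MetricSpace M] [CompactSpace M] [LocallyConnectedSpace M] :
    ∀ ε > (0:ℝ), ∃ η > (0:ℝ), ∀ p q : M, dist p q < η →
      ∃ C : Set M, IsConnected C ∧ p ∈ C ∧ q ∈ C ∧ ∀ z ∈ C, dist z p < ε := by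
  intro ε hε
  have hV : ∀ x : M, ∃ V : Set M, V ⊆ ball x (ε / 2) ∧ IsOpen V ∧ x ∈ V ∧ IsConnected V :=
    fun x => locallyConnectedSpace_iff_subsets_isOpen_isConnected.mp ‹_› x _
      (ball_mem_nhds x (by linarith))
  choose V hVsub hVopen hVmem hVconn using hV
  obtain ⟨η, hη0, hle⟩ := lebesgue_number_lemma_of_metric isCompact_univ hVopen
    (fun x _ => Set.mem_iUnion.mpr ⟨x, hVmem x⟩)
  refine ⟨η, hη0, fun p q hpq => ?_⟩
  obtain ⟨x, hx⟩ := hle p (Set.mem_univ p)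
  have hpV : p ∈ V x := hx (mem_ball_self hη0)
  have hqV : q ∈ V x := hx (by simpa [mem_ball, dist_comm] using hpq)
  refine ⟨V x, hVconn x, hpV, hqV, fun z hz => ?_⟩
  have h1 : dist z x < ε / 2 := mem_ball.mp (hVsub x hz)
  have h2 : dist p x < ε / 2 := mem_ball.mp (hVsub x hpV)
  calc dist z p ≤ dist z x + dist x p := dist_triangle _ _ _
    _ < ε / 2 + ε / 2 := by rw [dist_comm x p]; exact add_lt_add h1 h2
    _ = ε := by ring

/-- Theorem 3.3: if `M` is locally connected, `f` is cw-expansive and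
admits a shadowing map, then `f` is expansive. -/
theorem stmt3 {M : Type*} [MetricSpace M] [CompactSpace M] [LocallyConnectedSpace M]
    (f : Equiv.Perm M) (hf : Continuous (⇑f)) (hf' : Continuous (⇑f.symm))
    (hcw : CWExpansive f)
    (hsh : ∃ δ : ℝ, ∃ Sh : (ℤ → M) → M, IsShadowingMap f δ Sh) :
    Expansive f := by
  obtain ⟨δ, Sh, hSh⟩ := hsh
  obtain ⟨ξ, hξ, hcwe⟩ := hcw
  obtain ⟨γ, hγ0, hγδ, hshad⟩ := induces_shadowing f hf hSh (ξ / 6) (by linarith)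
  obtain ⟨α, hα0, hα⟩ := Metric.uniformContinuous_iff.mp
    (CompactSpace.uniformContinuous_of_continuous hf) (γ / 2) (by linarith)
  set η' : ℝ := min α (min (γ / 2) (ξ / 6)) with hη'def
  have hη'0 : 0 < η' := lt_min hα0 (lt_min (by linarith) (by linarith))
  have hη'α : η' ≤ α := min_le_left _ _
  have hη'γ : η' ≤ γ / 2 := (min_le_right _ _).trans (min_le_left _ _)
  have hη'ξ : η' ≤ ξ / 6 := (min_le_right _ _).trans (min_le_right _ _)
  obtain ⟨η, hη0, hconn⟩ := unif_loc_conn (M := M) η' hη'0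
  refine ⟨η / 2, by linarith, ?_⟩
  intro p q hpq
  by_contra hcontra
  push_neg at hcontra
  have hCex : ∀ i : ℤ, ∃ C : Set M, IsConnected C ∧ (f ^ i) p ∈ C ∧ (f ^ i) q ∈ C ∧
      ∀ z ∈ C, dist z ((f ^ i) p) < η' := by
    intro i
    exact hconn _ _ (lt_of_le_of_lt (hcontra i) (by linarith))
  choose C hCconn hCp hCq hCd using hCex
  set X : Set (ℤ → M) := Set.pi Set.univ C with hXdef
  have hXpo : X ⊆ PseudoOrbits (⇑f) γ := by
    intro x hx i
    have h1 : dist (x (i + 1)) ((f ^ (i + 1)) p) < η' := hCd _ _ (hx (i + 1) trivial)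
    have h2 : dist (x i) ((f ^ i) p) < η' := hCd _ _ (hx i trivial)
    have h3 : dist (f ((f ^ i) p)) (f (x i)) < γ / 2 := by
      apply hα
      rw [dist_comm]
      exact lt_of_lt_of_le h2 hη'α
    calc dist (x (i + 1)) (f (x i))
        ≤ dist (x (i + 1)) ((f ^ (i + 1)) p) + dist ((f ^ (i + 1)) p) (f (x i)) :=
          dist_triangle _ _ _
      _ = dist (x (i + 1)) ((f ^ (i + 1)) p) + dist (f ((f ^ i) p)) (f (x i)) := by
          rw [pow_succ_apply]
      _ ≤ γ / 2 + γ / 2 := add_le_add (le_of_lt (lt_of_lt_of_le h1 hη'γ)) h3.le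
      _ = γ := by ring
  have hXδ : X ⊆ PseudoOrbits (⇑f) δ := hXpo.trans (pseudoOrbits_mono _ hγδ)
  have hpX : orbitMap f p ∈ X := fun i _ => hCp i
  have hqX : orbitMap f q ∈ X := fun i _ => hCq i
  have hXconn : IsConnected X :=
    ⟨⟨orbitMap f p, hpX⟩, isPreconnected_univ_pi fun i => (hCconn i).isPreconnected⟩
  have hK : IsConnected (Sh '' X) := hXconn.image Sh (hSh.1.2.1.mono hXδ)
  have hpK : p ∈ Sh '' X := ⟨_, hpX, hSh.1.2.2 p⟩
  have hqK : q ∈ Sh '' X := ⟨_, hqX, hSh.1.2.2 q⟩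
  have hdiam : ∀ i : ℤ, Metric.diam ((f ^ i) '' (Sh '' X)) ≤ ξ := by
    intro i
    apply Metric.diam_le_of_forall_dist_le hξ.le
    rintro _ ⟨_, ⟨x, hx, rfl⟩, rfl⟩ _ ⟨_, ⟨x', hx', rfl⟩, rfl⟩
    have e1 : dist ((f ^ i) (Sh x)) (x i) ≤ ξ / 6 := hshad x (hXpo hx) i
    have e1' : dist ((f ^ i) (Sh x')) (x' i) ≤ ξ / 6 := hshad x' (hXpo hx') i
    have e2 : dist (x i) ((f ^ i) p) < η' := hCd _ _ (hx i trivial)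
    have e2' : dist (x' i) ((f ^ i) p) < η' := hCd _ _ (hx' i trivial)
    have e3 : dist (x i) (x' i) ≤ η' + η' := by
      calc dist (x i) (x' i) ≤ dist (x i) ((f ^ i) p) + dist ((f ^ i) p) (x' i) :=
            dist_triangle _ _ _
        _ ≤ η' + η' := add_le_add e2.le (by rw [dist_comm]; exact e2'.le)
    calc dist ((f ^ i) (Sh x)) ((f ^ i) (Sh x'))
        ≤ dist ((f ^ i) (Sh x)) (x i) + dist (x i) (x' i) + dist (x' i) ((f ^ i) (Sh x')) :=
          dist_triangle4 _ _ _ _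
      _ ≤ ξ / 6 + (η' + η') + ξ / 6 := by
          rw [dist_comm (x' i) ((f ^ i) (Sh x'))]
          exact add_le_add (add_le_add e1 e3) e1'
      _ ≤ ξ := by linarith
  exact hpq (hcwe (Sh '' X) hK hdiam hpK hqK)
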